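/- arXiv:2206.09444 — 2 statements merged into one kernel-verified Lean document; each statement's English description precedes it below -/
import Mathlib

section
/- Let ψ₀ : ℝ → ℝ be locally absolutely continuous with weak derivative ψ₁ : ℝ → ℝ, in the sense that ψ₀(b) − ψ₀(a) = ∫_a^b ψ₁(η) dη for all a < b, and suppose that ∫ |ψ₀(η)| φ(η; m, ν²) dη < ∞ and ∫ |ψ₁(η)| φ(η; m, ν²) dη < ∞ for every m ∈ ℝ and every ν > 0. Then for every m ∈ ℝ and ν > 0, the partial derivative with respect to m of Ψ₀(m, ν) = ∫ ψ₀(η) φ(η; m, ν²) dη exists and equals ∫ ψ₁(η) φ(η; m, ν²) dη. -/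
/-!
Substituting `η = m + z` gives `Ψ₀(m, ν) = ∫ ψ₀(m + z) φ(z; 0, ν²) dz`, so the weak-derivative
identity and Fubini yield `Ψ₀(b, ν) - Ψ₀(a, ν) = ∫_a^b Ψ₁(t, ν) dt` with
`Ψ₁(t, ν) = ∫ ψ₁(η) φ(η; t, ν²) dη`. Dominated convergence, with `φ(·; t, ν²)` bounded by a
multiple of `φ(·; c, 4ν²)` for `|t - c| ≤ 1`, makes `Ψ₁(·, ν)` continuous, and the fundamental
theorem of calculus concludes. If `ψ₁` is not a.e. strongly measurable, both sides degenerate: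
`ψ₀` is constant and the Bochner integral of `ψ₁ φ` is `0`.
-/

open MeasureTheory Real Filter

/-- Gaussian density with mean `m` and variance `ν ^ 2`, evaluated at `x`:
`φ(x; m, ν²) = (2πν²)^{-1/2} exp(−(x−m)²/(2ν²))`. -/
noncomputable def gpdf (m ν x : ℝ) : ℝ :=
  (Real.sqrt (2 * Real.pi * ν ^ 2))⁻¹ * Real.exp (-((x - m) ^ 2) / (2 * ν ^ 2))

/-- Gaussian cumulative distribution function with mean `m` and variance `ν ^ 2`:
`Φ(c; m, ν²) = ∫_{−∞}^{c} φ(η; m, ν²) dη`. -/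
noncomputable def gcdf (m ν c : ℝ) : ℝ := ∫ x in Set.Iio c, gpdf m ν x

open Set

section Gaussian

variable {ν : ℝ}

lemma gpdf_pos (hν : 0 < ν) (m x : ℝ) : 0 < gpdf m ν x := by
  have : 0 < 2 * π * ν ^ 2 := by positivity
  unfold gpdf
  positivity

lemma continuous_gpdf (m ν : ℝ) : Continuous (gpdf m ν) := by
  unfold gpdf; fun_prop

lemma continuous_gpdf_mean (ν x : ℝ) : Continuous fun m => gpdf m ν x := by
  unfold gpdf; fun_prop

lemma gpdf_mean_add (m ν z : ℝ) : gpdf m ν (m + z) = gpdf 0 ν z := by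
  simp [gpdf]

lemma integral_gpdf (hν : 0 < ν) (m : ℝ) : ∫ x, gpdf m ν x = 1 :=
  ProbabilityTheory.integral_gaussianPDFReal_eq_one m (v := ⟨ν ^ 2, sq_nonneg ν⟩)
    fun h => pow_ne_zero 2 hν.ne' (congrArg NNReal.toReal h)

/-- Shifting the mean by at most `1` is absorbed by quadrupling the variance, because
`(η - c)² ≤ 4 (η - t)² + 4 (t - c)²`. -/
lemma gpdf_le_of_abs_sub_le_one (hν : 0 < ν) {t c : ℝ} (h : |t - c| ≤ 1) (η : ℝ) :
    gpdf t ν η ≤ 2 * exp (1 / (2 * ν ^ 2)) * gpdf c (2 * ν) η := by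
  have hsqrt : √(2 * π * (2 * ν) ^ 2) = 2 * √(2 * π * ν ^ 2) := by
    rw [show 2 * π * (2 * ν) ^ 2 = 2 ^ 2 * (2 * π * ν ^ 2) by ring,
      sqrt_mul (by positivity), sqrt_sq (by norm_num)]
  have hexp : exp (-((η - t) ^ 2) / (2 * ν ^ 2)) ≤
      exp (1 / (2 * ν ^ 2)) * exp (-((η - c) ^ 2) / (2 * (2 * ν) ^ 2)) := by
    rw [← exp_add, exp_le_exp, div_add_div _ _ (by positivity) (by positivity),
      div_le_div_iff₀ (by positivity) (by positivity)]
    have htc : (t - c) ^ 2 ≤ 1 := by nlinarith [sq_abs (t - c), abs_nonneg (t - c)]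
    have hsq : (η - c) ^ 2 ≤ 4 * (η - t) ^ 2 + 4 := by
      nlinarith [sq_nonneg ((η - t) - (t - c))]
    nlinarith [mul_le_mul_of_nonneg_left hsq (by positivity : (0 : ℝ) ≤ 4 * (ν ^ 2 * ν ^ 2))]
  calc gpdf t ν η
      ≤ (√(2 * π * ν ^ 2))⁻¹ *
          (exp (1 / (2 * ν ^ 2)) * exp (-((η - c) ^ 2) / (2 * (2 * ν) ^ 2))) :=
        mul_le_mul_of_nonneg_left hexp (by positivity)
    _ = 2 * exp (1 / (2 * ν ^ 2)) * gpdf c (2 * ν) η := by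
        rw [gpdf, hsqrt]; field_simp

end Gaussian

section WeightedIntegrability

variable {f : ℝ → ℝ} {m ν : ℝ}

lemma integrable_mul_gpdf (hν : 0 < ν) (hf : AEStronglyMeasurable f)
    (h : Integrable fun η => |f η| * gpdf m ν η) : Integrable fun η => f η * gpdf m ν η :=
  h.mono' (hf.mul (continuous_gpdf m ν).aestronglyMeasurable) <| .of_forall fun η => by
    rw [norm_mul, norm_eq_abs, norm_of_nonneg (gpdf_pos hν m η).le]

lemma mul_gpdf_mul_inv (hν : 0 < ν) (f : ℝ → ℝ) (m η : ℝ) :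
    f η * gpdf m ν η * (gpdf m ν η)⁻¹ = f η := by
  rw [mul_assoc, mul_inv_cancel₀ (gpdf_pos hν m η).ne', mul_one]

lemma continuous_inv_gpdf (hν : 0 < ν) (m : ℝ) : Continuous fun η => (gpdf m ν η)⁻¹ :=
  (continuous_gpdf m ν).inv₀ fun η => (gpdf_pos hν m η).ne'

lemma aestronglyMeasurable_of_mul_gpdf (hν : 0 < ν)
    (h : AEStronglyMeasurable fun η => f η * gpdf m ν η) : AEStronglyMeasurable f := by
  refine (h.mul (continuous_inv_gpdf hν m).aestronglyMeasurable).congr (.of_forall fun η => ?_)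
  exact mul_gpdf_mul_inv hν f m η

lemma intervalIntegrable_of_integrable_mul_gpdf (hν : 0 < ν)
    (h : Integrable fun η => f η * gpdf m ν η) (a b : ℝ) : IntervalIntegrable f volume a b := by
  have := h.integrableOn.mul_continuousOn (continuous_inv_gpdf hν m).continuousOn
    (isCompact_uIcc (a := a) (b := b))
  simp only [mul_gpdf_mul_inv hν] at this
  exact this.intervalIntegrable

lemma integral_mul_gpdf_eq_integral_comp_add (f : ℝ → ℝ) (m ν : ℝ) :
    ∫ η, f η * gpdf m ν η = ∫ z, f (m + z) * gpdf 0 ν z := by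
  rw [← integral_add_left_eq_self (fun η => f η * gpdf m ν η) m]
  simp only [gpdf_mean_add]

lemma MeasureTheory.Integrable.comp_add_mul_gpdf (h : Integrable fun η => f η * gpdf m ν η) :
    Integrable fun z => f (m + z) * gpdf 0 ν z := by
  simpa only [gpdf_mean_add] using h.comp_add_left m

lemma continuous_integral_mul_gpdf (hν : 0 < ν) (hf : AEStronglyMeasurable f)
    (h : ∀ m, Integrable fun η => |f η| * gpdf m (2 * ν) η) :
    Continuous fun m => ∫ η, f η * gpdf m ν η := by
  refine continuous_iff_continuousAt.2 fun c => continuousAt_of_dominated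
    (bound := fun η => 2 * exp (1 / (2 * ν ^ 2)) * (|f η| * gpdf c (2 * ν) η))
    (.of_forall fun t => hf.mul (continuous_gpdf t ν).aestronglyMeasurable) ?_
    ((h c).const_mul _) (.of_forall fun η => (continuous_gpdf_mean ν η).continuousAt.const_mul _)
  filter_upwards [Metric.closedBall_mem_nhds c one_pos] with t ht
  refine .of_forall fun η => ?_
  rw [norm_mul, norm_eq_abs, norm_of_nonneg (gpdf_pos hν t η).le, mul_left_comm]
  exact mul_le_mul_of_nonneg_left
    (gpdf_le_of_abs_sub_le_one hν (by simpa [dist_eq] using ht) η) (abs_nonneg _)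

end WeightedIntegrability

section Primitive

variable {ψ₀ ψ₁ g : ℝ → ℝ}

lemma sub_eq_intervalIntegral_of_forall_lt
    (h : ∀ a b : ℝ, a < b → ψ₀ b - ψ₀ a = ∫ η in a..b, ψ₁ η) (a b : ℝ) :
    ψ₀ b - ψ₀ a = ∫ η in a..b, ψ₁ η := by
  rcases lt_trichotomy a b with hab | rfl | hab
  · exact h a b hab
  · simp
  · rw [intervalIntegral.integral_symm, ← h b a hab]
    ring

lemma continuous_of_sub_eq_intervalIntegral (h : ∀ a b, ψ₀ b - ψ₀ a = ∫ η in a..b, ψ₁ η)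
    (hψ₁ : ∀ a b, IntervalIntegrable ψ₁ volume a b) : Continuous ψ₀ := by
  have : ψ₀ = fun x => ψ₀ 0 + ∫ η in (0 : ℝ)..x, ψ₁ η := funext fun x => by linarith [h 0 x]
  rw [this]
  exact continuous_const.add (intervalIntegral.continuous_primitive hψ₁ 0)

lemma integral_setIntegral_comp_add_mul_swap {s : Set ℝ} (hψ₁ : AEStronglyMeasurable ψ₁)
    (hg : AEStronglyMeasurable g) (hint : ∀ t, Integrable fun z => ψ₁ (t + z) * g z)
    (hs : IntegrableOn (fun t => ∫ z, ‖ψ₁ (t + z) * g z‖) s) :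
    ∫ z, (∫ t in s, ψ₁ (t + z)) * g z = ∫ t in s, ∫ z, ψ₁ (t + z) * g z := by
  have hadd : Measure.QuasiMeasurePreserving (fun p : ℝ × ℝ => p.1 + p.2)
      ((volume.restrict s).prod volume) volume :=
    Measure.quasiMeasurePreserving_snd.comp (measurePreserving_prod_add _ _).quasiMeasurePreserving
  have hmeas : AEStronglyMeasurable (fun p : ℝ × ℝ => ψ₁ (p.1 + p.2) * g p.2)
      ((volume.restrict s).prod volume) :=
    (hψ₁.comp_quasiMeasurePreserving hadd).mul
      (hg.comp_quasiMeasurePreserving Measure.quasiMeasurePreserving_snd)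
  rw [integral_integral_swap ((integrable_prod_iff hmeas).2 ⟨.of_forall hint, hs⟩)]
  simp only [integral_mul_const]

lemma integral_comp_add_mul_sub_eq_intervalIntegral
    (h : ∀ a b, ψ₀ b - ψ₀ a = ∫ η in a..b, ψ₁ η) (hψ₁ : AEStronglyMeasurable ψ₁)
    (hg : AEStronglyMeasurable g) (hint₀ : ∀ t, Integrable fun z => ψ₀ (t + z) * g z)
    (hint₁ : ∀ t, Integrable fun z => ψ₁ (t + z) * g z) {a b : ℝ} (hab : a ≤ b)
    (hs : IntegrableOn (fun t => ∫ z, ‖ψ₁ (t + z) * g z‖) (Ioc a b)) :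
    (∫ z, ψ₀ (b + z) * g z) - ∫ z, ψ₀ (a + z) * g z
      = ∫ t in a..b, ∫ z, ψ₁ (t + z) * g z := by
  have hpointwise : ∀ z, ψ₀ (b + z) * g z - ψ₀ (a + z) * g z
      = (∫ t in Ioc a b, ψ₁ (t + z)) * g z := fun z => by
    rw [← sub_mul, h, ← intervalIntegral.integral_of_le hab,
      intervalIntegral.integral_comp_add_right ψ₁ z, add_comm a, add_comm b]
  rw [← integral_sub (hint₀ b) (hint₀ a), intervalIntegral.integral_of_le hab]
  simp only [hpointwise]
  exact integral_setIntegral_comp_add_mul_swap hψ₁ hg hint₁ hs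

end Primitive

section Derivative

variable {ψ₀ ψ₁ : ℝ → ℝ} {ν : ℝ}

lemma integral_mul_gpdf_sub_eq_intervalIntegral (hν : 0 < ν)
    (h : ∀ a b, ψ₀ b - ψ₀ a = ∫ η in a..b, ψ₁ η) (hψ₁ : AEStronglyMeasurable ψ₁)
    (hint₀ : ∀ m ν : ℝ, 0 < ν → Integrable fun η => |ψ₀ η| * gpdf m ν η)
    (hint₁ : ∀ m ν : ℝ, 0 < ν → Integrable fun η => |ψ₁ η| * gpdf m ν η) (a b : ℝ) :
    (∫ η, ψ₀ η * gpdf b ν η) - ∫ η, ψ₀ η * gpdf a ν η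
      = ∫ t in a..b, ∫ η, ψ₁ η * gpdf t ν η := by
  have hψ₀ : AEStronglyMeasurable ψ₀ :=
    (continuous_of_sub_eq_intervalIntegral h (intervalIntegrable_of_integrable_mul_gpdf hν
      (integrable_mul_gpdf hν hψ₁ (hint₁ 0 ν hν)))).aestronglyMeasurable
  have habs : Continuous fun t => ∫ η, |ψ₁ η| * gpdf t ν η :=
    continuous_integral_mul_gpdf hν hψ₁.norm fun m => by
      simpa only [abs_abs] using hint₁ m (2 * ν) (by positivity)
  have hnorm : (fun t => ∫ z, ‖ψ₁ (t + z) * gpdf 0 ν z‖) = fun t => ∫ η, |ψ₁ η| * gpdf t ν η :=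
    funext fun t => by
      simp only [integral_mul_gpdf_eq_integral_comp_add (fun η => |ψ₁ η|), norm_mul,
        norm_eq_abs, abs_of_pos (gpdf_pos hν 0 _)]
  have hle : ∀ a b : ℝ, a ≤ b → (∫ η, ψ₀ η * gpdf b ν η) - ∫ η, ψ₀ η * gpdf a ν η
      = ∫ t in a..b, ∫ η, ψ₁ η * gpdf t ν η := fun a b hab => by
    simp only [integral_mul_gpdf_eq_integral_comp_add ψ₀, integral_mul_gpdf_eq_integral_comp_add ψ₁]
    refine integral_comp_add_mul_sub_eq_intervalIntegral h hψ₁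
      (continuous_gpdf 0 ν).aestronglyMeasurable
      (fun t => (integrable_mul_gpdf hν hψ₀ (hint₀ t ν hν)).comp_add_mul_gpdf)
      (fun t => (integrable_mul_gpdf hν hψ₁ (hint₁ t ν hν)).comp_add_mul_gpdf) hab ?_
    rw [hnorm]
    exact habs.integrableOn_Ioc
  rcases le_total a b with hab | hab
  · exact hle a b hab
  · rw [intervalIntegral.integral_symm, ← hle b a hab]
    ring

lemma hasDerivAt_integral_mul_gpdf_of_aestronglyMeasurable (hν : 0 < ν)
    (h : ∀ a b, ψ₀ b - ψ₀ a = ∫ η in a..b, ψ₁ η) (hψ₁ : AEStronglyMeasurable ψ₁)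
    (hint₀ : ∀ m ν : ℝ, 0 < ν → Integrable fun η => |ψ₀ η| * gpdf m ν η)
    (hint₁ : ∀ m ν : ℝ, 0 < ν → Integrable fun η => |ψ₁ η| * gpdf m ν η) (m : ℝ) :
    HasDerivAt (fun m' => ∫ η, ψ₀ η * gpdf m' ν η) (∫ η, ψ₁ η * gpdf m ν η) m := by
  have hG : Continuous fun t => ∫ η, ψ₁ η * gpdf t ν η :=
    continuous_integral_mul_gpdf hν hψ₁ fun m => hint₁ m (2 * ν) (by positivity)
  have hF : (fun m' => ∫ η, ψ₀ η * gpdf m' ν η)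
      = fun m' => (∫ η, ψ₀ η * gpdf 0 ν η) + ∫ t in 0..m', ∫ η, ψ₁ η * gpdf t ν η :=
    funext fun m' => by
      rw [← integral_mul_gpdf_sub_eq_intervalIntegral hν h hψ₁ hint₀ hint₁]
      ring
  rw [hF]
  exact (hG.integral_hasStrictDerivAt 0 m).hasDerivAt.const_add _

end Derivative

/-- On some bounded interval `ψ₁` is not a.e. strongly measurable, so its integral vanishes over
every larger interval; splitting such an interval at `x` shows that `ψ₀ x` equals the common value
of `ψ₀` far out. -/
lemma exists_forall_eq_of_not_aestronglyMeasurable {ψ₀ ψ₁ : ℝ → ℝ}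
    (h : ∀ a b : ℝ, a < b → ψ₀ b - ψ₀ a = ∫ η in a..b, ψ₁ η)
    (hψ₁ : ¬ AEStronglyMeasurable ψ₁) : ∃ K, ∀ x, ψ₀ x = K := by
  have hzero : ∀ a b, a < b → ¬ AEStronglyMeasurable ψ₁ (volume.restrict (Ioc a b)) →
      ψ₀ b = ψ₀ a := fun a b hab hnot => by
    have := h a b hab
    rw [intervalIntegral.integral_of_le hab.le, integral_non_aestronglyMeasurable hnot] at this
    linarith
  obtain ⟨n, hn⟩ : ∃ n : ℕ, ¬ AEStronglyMeasurable ψ₁ (volume.restrict (Metric.ball 0 n)) := by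
    by_contra! hall
    exact hψ₁ (by simpa [Metric.iUnion_ball_nat] using aestronglyMeasurable_iUnion_iff.2 hall)
  have hwide : ∀ a b : ℝ, a ≤ -n → n ≤ b → ¬ AEStronglyMeasurable ψ₁ (volume.restrict (Ioc a b)) :=
    fun a b ha hb hab => hn <| hab.mono_set <| by
      rw [Real.ball_eq_Ioo, zero_sub, zero_add]
      exact Ioo_subset_Ioc_self.trans (Ioc_subset_Ioc ha hb)
  refine ⟨ψ₀ (n + 1), fun x => ?_⟩
  set a := min x (-n) - 1
  set b := max x n + 1
  have ha : a ≤ -n := by linarith [min_le_right x (-n : ℝ)]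
  have hax : a < x := by linarith [min_le_left x (-n : ℝ)]
  have hxb : x < b := by linarith [le_max_left x (n : ℝ)]
  have hb : n ≤ b := by linarith [le_max_right x (n : ℝ)]
  have hsplit := hwide a b ha hb
  rw [← Ioc_union_Ioc_eq_Ioc hax.le hxb.le, aestronglyMeasurable_union_iff, not_and_or] at hsplit
  have hxa : ψ₀ x = ψ₀ a := by
    rcases hsplit with hleft | hright
    · exact hzero a x hax hleft
    · rw [← hzero x b hxb hright, hzero a b (hax.trans hxb) (hwide a b ha hb)]
  rw [hxa, hzero a (n + 1) (by linarith) (hwide a _ ha (by linarith))]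

theorem psi1_deriv_under_integral (ψ₀ ψ₁ : ℝ → ℝ)
    (hweak : ∀ a b : ℝ, a < b → ψ₀ b - ψ₀ a = ∫ η in a..b, ψ₁ η)
    (hint0 : ∀ m ν : ℝ, 0 < ν → Integrable (fun η => |ψ₀ η| * gpdf m ν η))
    (hint1 : ∀ m ν : ℝ, 0 < ν → Integrable (fun η => |ψ₁ η| * gpdf m ν η))
    (m ν : ℝ) (hν : 0 < ν) :
    HasDerivAt (fun m' => ∫ η, ψ₀ η * gpdf m' ν η)
      (∫ η, ψ₁ η * gpdf m ν η) m := by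
  by_cases hψ₁ : AEStronglyMeasurable ψ₁
  · exact hasDerivAt_integral_mul_gpdf_of_aestronglyMeasurable hν
      (sub_eq_intervalIntegral_of_forall_lt hweak) hψ₁ hint0 hint1 m
  obtain ⟨K, hK⟩ := exists_forall_eq_of_not_aestronglyMeasurable hweak hψ₁
  have hF : (fun m' => ∫ η, ψ₀ η * gpdf m' ν η) = fun _ => K := funext fun m' => by
    simp only [hK, integral_const_mul, integral_gpdf hν, mul_one]
  have hG : ∫ η, ψ₁ η * gpdf m ν η = 0 :=
    integral_non_aestronglyMeasurable fun h => hψ₁ (aestronglyMeasurable_of_mul_gpdf hν h)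
  rw [hF, hG]
  exact hasDerivAt_const m K
end

section
/- Fix y ∈ {−1, +1}, m ∈ ℝ and ν > 0. Then ∫ 2·max(0, 1 − yη) φ(η; m, ν²) dη = 2[ (1 − ym) Φ(1; ym, ν²) + ν² φ(1; ym, ν²) ]. -/
open MeasureTheory Real Filter

/-!
Only the hinge region `η < 1` contributes. There `1 - η = (1 - m) + (m - η)`: the first part
integrates against `φ` to `(1 - m) Φ(1)`, and the second to `ν² φ(1)`, because
`ν² φ' = (m - η) φ` (Stein's identity) and `φ` vanishes at `-∞`. The case `y = -1` reduces
to `y = 1` by the reflection `η ↦ -η`, under which `φ(·; m)` becomes `φ(·; -m)`.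
-/

lemma gpdf_neg_neg (m ν x : ℝ) : gpdf (-m) ν (-x) = gpdf m ν x := by
  unfold gpdf; ring_nf

lemma gpdf_eq_const_mul_exp (m ν x : ℝ) :
    gpdf m ν x = (√(2 * π * ν ^ 2))⁻¹ * exp (-(2 * ν ^ 2)⁻¹ * (x - m) ^ 2) := by
  rw [gpdf]; ring_nf

section

variable (m : ℝ) {ν : ℝ} (hν : ν ≠ 0)
include hν

lemma integrable_gpdf : Integrable (gpdf m ν) := by
  have hb : 0 < (2 * ν ^ 2)⁻¹ := by positivity
  refine (((integrable_exp_neg_mul_sq hb).comp_sub_right m).const_mul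
    (√(2 * π * ν ^ 2))⁻¹).congr ?_
  exact .of_forall fun x => (gpdf_eq_const_mul_exp m ν x).symm

lemma integrable_sub_mul_gpdf : Integrable fun x => (m - x) * gpdf m ν x := by
  have hb : 0 < (2 * ν ^ 2)⁻¹ := by positivity
  refine (((integrable_mul_exp_neg_mul_sq hb).comp_sub_right m).const_mul
    (-(√(2 * π * ν ^ 2))⁻¹)).congr ?_
  exact .of_forall fun x => by dsimp only; rw [gpdf_eq_const_mul_exp]; ring

lemma hasDerivAt_sq_mul_gpdf (x : ℝ) :
    HasDerivAt (fun x => ν ^ 2 * gpdf m ν x) ((m - x) * gpdf m ν x) x := by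
  have hsq : HasDerivAt (fun x : ℝ => -((x - m) ^ 2) / (2 * ν ^ 2))
      (-(2 * (x - m)) / (2 * ν ^ 2)) x := by
    simpa using (((hasDerivAt_id x).sub_const m).pow 2).neg.div_const (2 * ν ^ 2)
  refine ((hsq.exp.const_mul _).const_mul (ν ^ 2)).congr_deriv ?_
  rw [gpdf]
  field_simp
  ring

lemma setIntegral_Iio_sub_mul_gpdf (c : ℝ) :
    ∫ x in Set.Iio c, (m - x) * gpdf m ν x = ν ^ 2 * gpdf m ν c := by
  have hderiv := fun x (_ : x ∈ Set.Iic c) => hasDerivAt_sq_mul_gpdf m hν x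
  have hint := (integrable_sub_mul_gpdf m hν).integrableOn (s := Set.Iic c)
  have hlim := tendsto_zero_of_hasDerivAt_of_integrableOn_Iic hderiv hint
    ((integrable_gpdf m hν).const_mul (ν ^ 2)).integrableOn
  rw [← integral_Iic_eq_integral_Iio, integral_Iic_of_hasDerivAt_of_tendsto' hderiv hint hlim,
    sub_zero]

lemma integral_max_zero_sub_mul_gpdf (c : ℝ) :
    ∫ x, max 0 (c - x) * gpdf m ν x = (c - m) * gcdf m ν c + ν ^ 2 * gpdf m ν c := by
  have hhinge : ∫ x, max 0 (c - x) * gpdf m ν x = ∫ x in Set.Iio c, (c - x) * gpdf m ν x := by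
    rw [← setIntegral_eq_integral_of_forall_compl_eq_zero (s := Set.Iio c)]
    · refine setIntegral_congr_fun measurableSet_Iio fun x hx => ?_
      rw [max_eq_right (sub_nonneg.2 (le_of_lt hx))]
    · intro x hx
      rw [max_eq_left (sub_nonpos.2 (not_lt.1 hx)), zero_mul]
  have hsplit : (fun x => (c - x) * gpdf m ν x)
      = fun x => (c - m) * gpdf m ν x + (m - x) * gpdf m ν x := by
    ext x; ring
  rw [hhinge, hsplit, integral_add ((integrable_gpdf m hν).const_mul _).integrableOn
    (integrable_sub_mul_gpdf m hν).integrableOn, integral_const_mul,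
    setIntegral_Iio_sub_mul_gpdf m hν, gcdf]

end

theorem svc_Psi0 (y m ν : ℝ) (hy : y = -1 ∨ y = 1) (hν : 0 < ν) :
    ∫ η, 2 * max 0 (1 - y * η) * gpdf m ν η
      = 2 * ((1 - y * m) * gcdf (y * m) ν 1 + ν ^ 2 * gpdf (y * m) ν 1) := by
  have hreflect : ∫ η, max 0 (1 - y * η) * gpdf m ν η
      = ∫ η, max 0 (1 - η) * gpdf (y * m) ν η := by
    rcases hy with rfl | rfl
    · rw [← integral_neg_eq_self]
      simp only [neg_mul, one_mul, neg_neg, ← gpdf_neg_neg m ν]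
    · simp only [one_mul]
  simp only [mul_assoc (2 : ℝ)]
  rw [integral_const_mul, hreflect, integral_max_zero_sub_mul_gpdf _ hν.ne']
end
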